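/- Define t̃_k(L,ℓ) = 2(L²-ℓ²)^k/(4^k k!) for 0 ≤ ℓ < L and t̃_k(L,ℓ) = 0 for ℓ ≥ L (k ≥ 0), and t_k(L) = (2/k!)(L/2)^{2k}. Then for all integers a, b ≥ 0 and 0 < L₁ < L₂: ∫₀^∞ ℓ · t̃_a(L₁,ℓ) · t̃_b(L₂,ℓ) dℓ = 2 ∑_{m=0}^{b} (-1)^m t_{a+1+m}(L₁) t_{b-m}(L₂). -/

import Mathlib

open MeasureTheory Finset

noncomputable def tW (k : ℕ) (L : ℝ) : ℝ := 2 / (Nat.factorial k) * (L / 2) ^ (2 * k)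

noncomputable def ttilde (k : ℕ) (L ℓ : ℝ) : ℝ :=
  if ℓ < L then 2 * (L ^ 2 - ℓ ^ 2) ^ k / (4 ^ k * Nat.factorial k) else 0

/-!
Since `L₁ < L₂`, on `(0, L₁)` both factors are given by their polynomial branches
`P_k(L, ℓ) = 2(L² - ℓ²)^k / (4^k k!)` (`ttildePoly`), so the integral is
`I(a, b) = ∫₀^{L₁} ℓ P_a(L₁, ℓ) P_b(L₂, ℓ) dℓ`. These satisfy `∂ℓ P_{k+1}(L, ℓ) = -(ℓ/2) P_k(L, ℓ)`,
`P_k(L, 0) = t_k(L)` and `P_{k+1}(L, L) = 0`. Hence `ℓ P_a(L₁, ℓ) = -2 ∂ℓ P_{a+1}(L₁, ℓ)`, and one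
integration by parts gives `I(a, b + 1) = 2 t_{a+1}(L₁) t_{b+1}(L₂) - I(a + 1, b)`; iterating down
to `I(a + b + 1, 0) = 4 t_{a+b+2}(L₁)` produces the alternating sum.
-/

noncomputable def ttildePoly (k : ℕ) (L ℓ : ℝ) : ℝ := 2 * (L ^ 2 - ℓ ^ 2) ^ k / (4 ^ k * k.factorial)

lemma ttilde_of_lt {k : ℕ} {L ℓ : ℝ} (h : ℓ < L) : ttilde k L ℓ = ttildePoly k L ℓ :=
  if_pos h

lemma ttilde_of_le {k : ℕ} {L ℓ : ℝ} (h : L ≤ ℓ) : ttilde k L ℓ = 0 :=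
  if_neg h.not_gt

lemma continuous_ttildePoly (k : ℕ) (L : ℝ) : Continuous (ttildePoly k L) := by
  unfold ttildePoly; fun_prop

lemma ttildePoly_zero (L ℓ : ℝ) : ttildePoly 0 L ℓ = 2 := by
  simp [ttildePoly]

lemma ttildePoly_apply_zero (k : ℕ) (L : ℝ) : ttildePoly k L 0 = tW k L := by
  rw [ttildePoly, tW, div_pow, pow_mul, pow_mul]
  field_simp
  norm_num
  ring

lemma ttildePoly_succ_self (k : ℕ) (L : ℝ) : ttildePoly (k + 1) L L = 0 := by
  simp [ttildePoly]

lemma hasDerivAt_ttildePoly_succ (k : ℕ) (L x : ℝ) :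
    HasDerivAt (ttildePoly (k + 1) L) (-(x / 2) * ttildePoly k L x) x := by
  have hsq : HasDerivAt (fun y : ℝ => L ^ 2 - y ^ 2) (-(2 * x)) x := by
    simpa using (hasDerivAt_pow 2 x).const_sub (L ^ 2)
  refine (((hsq.pow (k + 1)).const_mul 2).div_const _).congr_deriv ?_
  rw [ttildePoly, Nat.factorial_succ]
  push_cast
  field_simp
  ring

lemma integral_mul_ttildePoly_mul {g g' : ℝ → ℝ} (a : ℕ) (L : ℝ)
    (hg : ∀ x ∈ Set.uIcc 0 L, HasDerivAt g (g' x) x) (hg' : IntervalIntegrable g' volume 0 L) :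
    ∫ x in (0 : ℝ)..L, x * ttildePoly a L x * g x
      = 2 * tW (a + 1) L * g 0 + 2 * ∫ x in (0 : ℝ)..L, ttildePoly (a + 1) L x * g' x := by
  have hv : ∀ x ∈ Set.uIcc (0 : ℝ) L,
      HasDerivAt (fun y => -2 * ttildePoly (a + 1) L y) (x * ttildePoly a L x) x := fun x _ =>
    ((hasDerivAt_ttildePoly_succ a L x).const_mul (-2 : ℝ)).congr_deriv (by ring)
  have ibp := intervalIntegral.integral_mul_deriv_eq_deriv_mul hg hv hg'
    ((continuous_id.mul (continuous_ttildePoly a L)).intervalIntegrable 0 L)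
  calc ∫ x in (0 : ℝ)..L, x * ttildePoly a L x * g x
      = ∫ x in (0 : ℝ)..L, g x * (x * ttildePoly a L x) := by
        congr 1; ext x; ring
    _ = 2 * tW (a + 1) L * g 0 + 2 * ∫ x in (0 : ℝ)..L, ttildePoly (a + 1) L x * g' x := by
        have hrest : ∫ x in (0 : ℝ)..L, g' x * (-2 * ttildePoly (a + 1) L x)
            = -2 * ∫ x in (0 : ℝ)..L, ttildePoly (a + 1) L x * g' x := by
          rw [← intervalIntegral.integral_const_mul]; congr 1; ext x; ring
        rw [ibp, hrest, ttildePoly_succ_self, ttildePoly_apply_zero]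
        ring

lemma sum_range_succ_alternating {R : Type*} [CommRing R] (u v : ℕ → R) (a b : ℕ) :
    ∑ m ∈ range (b + 1 + 1), (-1) ^ m * u (a + 1 + m) * v (b + 1 - m)
      = u (a + 1) * v (b + 1) - ∑ m ∈ range (b + 1), (-1) ^ m * u (a + 1 + 1 + m) * v (b - m) := by
  rw [sum_range_succ', sub_eq_add_neg, ← sum_neg_distrib, add_comm]
  simp only [pow_zero, one_mul, add_zero, Nat.sub_zero]
  congr 1
  refine sum_congr rfl fun m _ => ?_
  rw [show a + 1 + (m + 1) = a + 1 + 1 + m by ring, show b + 1 - (m + 1) = b - m by omega, pow_succ]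
  ring

lemma integral_mul_ttildePoly_mul_ttildePoly (L₁ L₂ : ℝ) (a b : ℕ) :
    ∫ x in (0 : ℝ)..L₁, x * ttildePoly a L₁ x * ttildePoly b L₂ x
      = 2 * ∑ m ∈ range (b + 1), (-1) ^ m * tW (a + 1 + m) L₁ * tW (b - m) L₂ := by
  induction b generalizing a with
  | zero =>
    simp only [ttildePoly_zero]
    rw [integral_mul_ttildePoly_mul a L₁ (fun x _ => hasDerivAt_const x 2) intervalIntegrable_const]
    simp only [mul_zero, intervalIntegral.integral_zero, zero_add, sum_range_one, pow_zero,
      add_zero, tW]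
    norm_num
    ring
  | succ b ih =>
    rw [integral_mul_ttildePoly_mul a L₁ (fun x _ => hasDerivAt_ttildePoly_succ b L₂ x)
      (((continuous_id.div_const 2).neg.mul (continuous_ttildePoly b L₂)).intervalIntegrable 0 L₁)]
    have hrest : ∫ x in (0 : ℝ)..L₁, ttildePoly (a + 1) L₁ x * (-(x / 2) * ttildePoly b L₂ x)
        = -(1 / 2) * ∫ x in (0 : ℝ)..L₁, x * ttildePoly (a + 1) L₁ x * ttildePoly b L₂ x := by
      rw [← intervalIntegral.integral_const_mul]; congr 1; ext x; ring
    rw [hrest, ih, ttildePoly_apply_zero,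
      sum_range_succ_alternating (fun k => tW k L₁) (fun k => tW k L₂)]
    ring

/-- `∫₀^∞ ℓ t̃_a(L₁,ℓ) t̃_b(L₂,ℓ) dℓ = 2 ∑_{m=0}^b (-1)^m t_{a+1+m}(L₁) t_{b-m}(L₂)`. -/
theorem integral_ttilde_mul (a b : ℕ) (L₁ L₂ : ℝ) (h1 : 0 < L₁) (h2 : L₁ < L₂) :
    ∫ ℓ in Set.Ioi (0 : ℝ), ℓ * ttilde a L₁ ℓ * ttilde b L₂ ℓ
      = 2 * ∑ m ∈ range (b + 1), (-1) ^ m * tW (a + 1 + m) L₁ * tW (b - m) L₂ := by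
  have h_outside : ∀ ℓ ∈ Set.Ioi 0 \ Set.Ioo 0 L₁, ℓ * ttilde a L₁ ℓ * ttilde b L₂ ℓ = 0 :=
    fun ℓ hℓ => by
      rw [ttilde_of_le (le_of_not_gt fun h => hℓ.2 ⟨hℓ.1, h⟩), mul_zero, zero_mul]
  have h_inside : Set.EqOn (fun ℓ => ℓ * ttilde a L₁ ℓ * ttilde b L₂ ℓ)
      (fun ℓ => ℓ * ttildePoly a L₁ ℓ * ttildePoly b L₂ ℓ) (Set.Ioo 0 L₁) :=
    fun ℓ hℓ => by simp only [ttilde_of_lt hℓ.2, ttilde_of_lt (hℓ.2.trans h2)]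
  rw [setIntegral_eq_of_subset_of_forall_sdiff_eq_zero measurableSet_Ioi Set.Ioo_subset_Ioi_self
      h_outside, setIntegral_congr_fun measurableSet_Ioo h_inside, ← integral_Ioc_eq_integral_Ioo,
    ← intervalIntegral.integral_of_le h1.le]
  exact integral_mul_ttildePoly_mul_ttildePoly L₁ L₂ a b
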